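/- arXiv:2505.23470 — 4 statements merged into one kernel-verified Lean document; each statement's English description precedes it below -/
import Mathlib

section
/- Let X be a type, Y a nonempty type of labels, Z : Finset X a finite set of datapoints, y : X → Y a desired labeling, and P : Set (X → Bool) a family of predicates that is partitioning on Z, i.e., for all x₁, x₂ ∈ Z with x₁ ≠ x₂ there exists p ∈ P with p x₁ ≠ p x₂. Then there exists a decision tree T over X with labels in Y, all of whose internal-node predicates belong to P, whose size (number of internal nodes) is at most Z.card, and such that eval T x = y x for every x ∈ Z. -/
/-- A decision tree: either a leaf with a label, or an internal node with a predicate,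
a false-subtree and a true-subtree. -/
inductive DTree (X Y : Type*) where
  | leaf (y : Y) : DTree X Y
  | node (p : X → Bool) (f t : DTree X Y) : DTree X Y

namespace DTree

variable {X Y : Type*}

/-- Evaluation of a decision tree on an input. -/
def eval : DTree X Y → X → Y
  | leaf y, _ => y
  | node p f t, x => if p x then t.eval x else f.eval x

/-- Size of a decision tree: the number of internal nodes. -/
def size : DTree X Y → ℕ
  | leaf _ => 0
  | node _ f t => f.size + t.size + 1

/-- A predicate appears in a tree if it labels some internal node. -/
def appears (p : X → Bool) : DTree X Y → Prop
  | leaf _ => False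
  | node q f t => p = q ∨ f.appears p ∨ t.appears p

end DTree

theorem exists_dtree_aux
    {X Y : Type*} [Nonempty Y] (P : Set (X → Bool)) (y : X → Y) :
    ∀ n (Z : Finset X), Z.card = n → Z.Nonempty →
    (∀ x₁ ∈ Z, ∀ x₂ ∈ Z, x₁ ≠ x₂ → ∃ p ∈ P, p x₁ ≠ p x₂) →
    ∃ T : DTree X Y, (∀ p : X → Bool, T.appears p → p ∈ P) ∧
      T.size + 1 ≤ Z.card ∧ ∀ x ∈ Z, T.eval x = y x := by
  intro n
  induction n using Nat.strong_induction_on with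
  | _ n ih =>
    intro Z hcard hne hP
    obtain ⟨x₀, hx₀⟩ := hne
    by_cases hall : ∀ x ∈ Z, y x = y x₀
    · refine ⟨.leaf (y x₀), fun p hp => hp.elim, ?_, fun x hx => (hall x hx).symm ▸ rfl⟩
      simpa [DTree.size] using Finset.card_pos.mpr ⟨x₀, hx₀⟩
    · push_neg at hall
      obtain ⟨x₁, hx₁, hy₁⟩ := hall
      have hne01 : x₁ ≠ x₀ := fun h => hy₁ (by rw [h])
      obtain ⟨p, hpP, hpne⟩ := hP x₁ hx₁ x₀ hx₀ hne01
      set Z₁ := Z.filter (fun x => p x = true) with hZ₁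
      set Z₀ := Z.filter (fun x => p x = false) with hZ₀
      have hsum : Z₁.card + Z₀.card = Z.card := by
        simpa using Finset.card_filter_add_card_filter_not
          (s := Z) (p := fun x => p x = true)
      have hmem₁ : ∀ x ∈ Z, p x = true → x ∈ Z₁ := fun x hx h =>
        Finset.mem_filter.mpr ⟨hx, h⟩
      have hmem₀ : ∀ x ∈ Z, p x = false → x ∈ Z₀ := fun x hx h =>
        Finset.mem_filter.mpr ⟨hx, h⟩
      have hne₁ : Z₁.Nonempty := by
        by_cases h : p x₁ = true
        · exact ⟨x₁, hmem₁ x₁ hx₁ h⟩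
        · by_cases h' : p x₀ = true
          · exact ⟨x₀, hmem₁ x₀ hx₀ h'⟩
          · exact absurd ((Bool.not_eq_true _ ▸ h : p x₁ = false).trans
              (Bool.not_eq_true _ ▸ h' : p x₀ = false).symm) hpne
      have hne₀ : Z₀.Nonempty := by
        by_cases h : p x₁ = true
        · by_cases h' : p x₀ = true
          · exact absurd (h.trans h'.symm) hpne
          · exact ⟨x₀, hmem₀ x₀ hx₀ (Bool.not_eq_true _ ▸ h')⟩
        · exact ⟨x₁, hmem₀ x₁ hx₁ (Bool.not_eq_true _ ▸ h)⟩
      have hlt₁ : Z₁.card < n := by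
        have := Finset.card_pos.mpr hne₀; omega
      have hlt₀ : Z₀.card < n := by
        have := Finset.card_pos.mpr hne₁; omega
      have hP₁ : ∀ a ∈ Z₁, ∀ b ∈ Z₁, a ≠ b → ∃ q ∈ P, q a ≠ q b := fun a ha b hb hab =>
        hP a (Finset.mem_filter.mp ha).1 b (Finset.mem_filter.mp hb).1 hab
      have hP₀ : ∀ a ∈ Z₀, ∀ b ∈ Z₀, a ≠ b → ∃ q ∈ P, q a ≠ q b := fun a ha b hb hab =>
        hP a (Finset.mem_filter.mp ha).1 b (Finset.mem_filter.mp hb).1 hab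
      obtain ⟨T₁, hT₁P, hT₁s, hT₁e⟩ := ih Z₁.card hlt₁ Z₁ rfl hne₁ hP₁
      obtain ⟨T₀, hT₀P, hT₀s, hT₀e⟩ := ih Z₀.card hlt₀ Z₀ rfl hne₀ hP₀
      refine ⟨.node p T₀ T₁, ?_, ?_, ?_⟩
      · rintro q (rfl | hq | hq)
        · exact hpP
        · exact hT₀P q hq
        · exact hT₁P q hq
      · simp only [DTree.size]; omega
      · intro x hx
        simp only [DTree.eval]
        by_cases h : p x = true
        · rw [h]; simpa using hT₁e x (hmem₁ x hx h)
        · rw [if_neg h]; exact hT₀e x (hmem₀ x hx (Bool.not_eq_true _ ▸ h))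

/-- Existence (and cost bound) of path refinement repairs: if the predicate space `P`
is partitioning on the finite set `Z`, then there is a decision tree of size at most
`Z.card` using only predicates from `P` that realizes the desired labeling `y` on `Z`. -/
theorem exists_decision_tree_realizing_labels
    {X Y : Type*} [Nonempty Y] (Z : Finset X) (y : X → Y) (P : Set (X → Bool))
    (hP : ∀ x₁ ∈ Z, ∀ x₂ ∈ Z, x₁ ≠ x₂ → ∃ p ∈ P, p x₁ ≠ p x₂) :
    ∃ T : DTree X Y, (∀ p : X → Bool, T.appears p → p ∈ P) ∧
      T.size ≤ Z.card ∧ ∀ x ∈ Z, T.eval x = y x := by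
  rcases Z.eq_empty_or_nonempty with rfl | hne
  · exact ⟨.leaf Classical.ofNonempty, fun p hp => hp.elim, by simp [DTree.size], by simp⟩
  · obtain ⟨T, h1, h2, h3⟩ := exists_dtree_aux P y Z.card Z rfl hne hP
    exact ⟨T, h1, by omega, h3⟩
end

section
/- Let X be a type with decidable equality, U : Finset X with U.card = n ≥ 1, m ≥ 1, and S : Fin m → Finset X with S i ⊆ U for every i. If I : Finset (Fin m) satisfies ⋃_{i ∈ I} S i = U and Σ_{i ∈ I} ((S i).card + n·m) ≤ n·m + k·(n·m), then there exists I' ⊆ Fin m with I'.card ≤ k and ⋃_{i ∈ I'} S i = U; one may take I' = {i ∈ I : S i ≠ ∅}. -/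
/-- Backward direction in the Set Cover reduction for the Rule Repair Problem:
any covering family whose repair cost is at most `n·m + k·(n·m)` yields a set cover
of size at most `k`; one may take the subfamily of indices with nonempty sets. -/
theorem cover_of_repair_cost
    {X : Type*} [DecidableEq X] (n m k : ℕ) (hn : 1 ≤ n) (hm : 1 ≤ m)
    (U : Finset X) (hU : U.card = n)
    (S : Fin m → Finset X) (hS : ∀ i, S i ⊆ U)
    (I : Finset (Fin m)) (hcover : I.biUnion S = U)
    (hcost : ∑ i ∈ I, ((S i).card + n * m) ≤ n * m + k * (n * m)) :
    ∃ I' : Finset (Fin m), I'.card ≤ k ∧ I'.biUnion S = U ∧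
      I' = I.filter (fun i => S i ≠ ∅) := by
  set I' := I.filter (fun i => S i ≠ ∅) with hI'
  refine ⟨I', ?_, ?_, rfl⟩
  · -- cardinality bound
    by_contra hk
    push_neg at hk
    have h1 : I'.card * (1 + n * m) ≤ ∑ i ∈ I', ((S i).card + n * m) := by
      rw [← Finset.sum_const_nat (m := 1 + n * m) (fun _ _ => rfl)]
      refine Finset.sum_le_sum fun i hi => ?_
      have : S i ≠ ∅ := (Finset.mem_filter.mp hi).2
      have : 1 ≤ (S i).card := Finset.card_pos.mpr (Finset.nonempty_iff_ne_empty.mpr this)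
      omega
    have h2 : ∑ i ∈ I', ((S i).card + n * m) ≤ ∑ i ∈ I, ((S i).card + n * m) :=
      Finset.sum_le_sum_of_subset (Finset.filter_subset _ _)
    have hnm : 1 ≤ n * m := Nat.one_le_iff_ne_zero.mpr (by positivity)
    have : (k + 1) * (1 + n * m) ≤ n * m + k * (n * m) := by
      calc (k + 1) * (1 + n * m) ≤ I'.card * (1 + n * m) :=
            Nat.mul_le_mul_right _ hk
        _ ≤ _ := le_trans h1 (le_trans h2 hcost)
    nlinarith
  · -- cover
    rw [← hcover]
    apply Finset.Subset.antisymm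
    · exact Finset.biUnion_subset_biUnion_of_subset_left _ (Finset.filter_subset _ _)
    · intro x hx
      obtain ⟨i, hi, hxi⟩ := Finset.mem_biUnion.mp hx
      exact Finset.mem_biUnion.mpr ⟨i, Finset.mem_filter.mpr ⟨hi, fun h => by
        simp [h] at hxi⟩, hxi⟩
end

section
/- Let X be a type with decidable equality, U : Finset X with U.card = n ≥ 1, m ≥ 1, and S : Fin m → Finset X with S i ⊆ U for every i. Then for every natural number k, the following are equivalent: (1) there exists I' ⊆ Fin m with I'.card ≤ k and ⋃_{i ∈ I'} S i = U; (2) there exists I ⊆ Fin m with ⋃_{i ∈ I} S i = U and Σ_{i ∈ I} ((S i).card + n·m) ≤ n·m + k·(n·m). -/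
/-- Correctness of the Set Cover reduction for the Rule Repair Problem: a set cover of
size at most `k` exists iff a covering family of repair cost at most `n·m + k·(n·m)`
exists. -/
theorem setCover_iff_repair_cost
    {X : Type*} [DecidableEq X] (n m : ℕ) (hn : 1 ≤ n) (hm : 1 ≤ m)
    (U : Finset X) (hU : U.card = n)
    (S : Fin m → Finset X) (hS : ∀ i, S i ⊆ U) (k : ℕ) :
    (∃ I' : Finset (Fin m), I'.card ≤ k ∧ I'.biUnion S = U) ↔
    (∃ I : Finset (Fin m), I.biUnion S = U ∧
      ∑ i ∈ I, ((S i).card + n * m) ≤ n * m + k * (n * m)) := by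
  constructor
  · rintro ⟨I, hk, hcov⟩
    refine ⟨I, hcov, ?_⟩
    rw [Finset.sum_add_distrib, Finset.sum_const, smul_eq_mul]
    have h1 : ∑ i ∈ I, (S i).card ≤ ∑ i ∈ I, n := by
      refine Finset.sum_le_sum fun i _ => ?_
      calc (S i).card ≤ U.card := Finset.card_le_card (hS i)
        _ = n := hU
    have h2 : I.card ≤ m := by
      simpa using Finset.card_le_card (Finset.subset_univ I)
    calc ∑ i ∈ I, (S i).card + I.card * (n * m)
        ≤ I.card * n + k * (n * m) := by
          refine Nat.add_le_add ?_ (Nat.mul_le_mul_right _ hk)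
          simpa [Finset.sum_const, smul_eq_mul] using h1
      _ ≤ n * m + k * (n * m) := by
          refine Nat.add_le_add_right ?_ _
          calc I.card * n ≤ m * n := Nat.mul_le_mul_right n h2
            _ = n * m := Nat.mul_comm m n
  · rintro ⟨I, hcov, hcost⟩
    refine ⟨I, ?_, hcov⟩
    by_contra hlt
    push_neg at hlt
    have hcard : k + 1 ≤ I.card := hlt
    have hsum : ∑ i ∈ I, ((S i).card + n * m) ≥ I.card * (n * m) := by
      rw [Finset.sum_add_distrib, Finset.sum_const, smul_eq_mul]
      omega
    have hIc : I.card * (n * m) ≤ (k + 1) * (n * m) := by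
      calc I.card * (n * m) ≤ ∑ i ∈ I, ((S i).card + n * m) := hsum
        _ ≤ n * m + k * (n * m) := hcost
        _ = (k + 1) * (n * m) := by ring
    have hnm : 1 ≤ n * m := Nat.one_le_iff_ne_zero.mpr (by positivity)
    have hEq : I.card = k + 1 := le_antisymm (Nat.le_of_mul_le_mul_right hIc hnm) hcard
    -- then all sets in I are empty
    have hS0 : ∑ i ∈ I, (S i).card = 0 := by
      have := hcost
      rw [Finset.sum_add_distrib, Finset.sum_const, smul_eq_mul, hEq] at this
      have h3 : (k + 1) * (n * m) = n * m + k * (n * m) := by ring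
      omega
    have hempty : ∀ i ∈ I, S i = ∅ := by
      intro i hi
      have := (Finset.sum_eq_zero_iff.mp hS0) i hi
      exact Finset.card_eq_zero.mp this
    have : U = ∅ := by
      rw [← hcov]
      rw [Finset.eq_empty_iff_forall_notMem]
      intro x hx
      rw [Finset.mem_biUnion] at hx
      obtain ⟨i, hi, hxi⟩ := hx
      rw [hempty i hi] at hxi
      exact absurd hxi (Finset.notMem_empty x)
    rw [this] at hU
    simp at hU
    omega
end

section
/- Let V be a nonempty type of propositional variables with decidable equality, let φ = [C₁, …, C_m] be a 3CNF formula (a list of m clauses, each clause a finite set of exactly three literals over V), let α : V → Bool be an assignment, and let k ≤ m. Then the number of indices i with α satisfying C_i is at least k if and only if there exists a formula φ' obtained from φ by adding at most m − k literals to its clauses such that α satisfies every clause of φ'. -/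
/-!
A clause of `φ'` that `α` satisfies, extending a clause of `φ` that `α` does not satisfy, must
contain at least one added literal, so at least as many literals are added as `α` leaves clauses
of `φ` unsatisfied. Conversely, adding one literal `(v, α v)`, for a fixed variable `v`, to each
unsatisfied clause makes every clause satisfied. So the least number of literals to add is the
number `m - #sat` of unsatisfied clauses, and it is at most `m - k` iff `k ≤ #sat`.
-/

/-- A clause (a finite set of literals `(v, s)`) is satisfied by an assignment `α`
iff it contains a literal `(v, s)` with `α v = s`. -/
def ClauseSat {V : Type*} (α : V → Bool) (C : Finset (V × Bool)) : Prop :=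
  ∃ l ∈ C, α l.1 = l.2

instance {V : Type*} (α : V → Bool) (C : Finset (V × Bool)) :
    Decidable (ClauseSat α C) := by
  unfold ClauseSat; infer_instance

/-- `AddedAtMost φ φ' t`: the formula `φ'` is obtained from the formula `φ` by adding
at most `t` literals to its clauses: both are lists of clauses of the same length,
each clause of `φ` is a subset of the corresponding clause of `φ'`, and the total
number of added literals is at most `t`. -/
def AddedAtMost {V : Type*} [DecidableEq V]
    (φ φ' : List (Finset (V × Bool))) (t : ℕ) : Prop :=
  List.Forall₂ (· ⊆ ·) φ φ' ∧
  (((φ.zip φ').map (fun p => p.2.card - p.1.card)).sum ≤ t)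

namespace List

variable {α β : Type*}

theorem countP_eq_sum_map_ite (p : α → Bool) (l : List α) :
    l.countP p = (l.map fun a => if p a then 1 else 0).sum := by
  induction l with
  | nil => rfl
  | cons a l ih => simp [countP_cons, ih, add_comm]

variable {R : α → β → Prop} {l : List α} {l' : List β}

theorem Forall₂.and_forall_mem_right {p : β → Prop} (h : Forall₂ R l l') (hp : ∀ b ∈ l', p b) :
    Forall₂ (fun a b => R a b ∧ p b) l l' := by
  induction h with
  | nil => exact .nil
  | cons hab _ ih =>
    rw [forall_mem_cons] at hp
    exact .cons ⟨hab, hp.1⟩ (ih hp.2)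

variable {M : Type*} [AddCommMonoid M] [PartialOrder M] [IsOrderedAddMonoid M]

theorem Forall₂.sum_map_le_sum_map_zip (h : Forall₂ R l l') {f : α → M} {g : α → β → M}
    (hfg : ∀ a b, R a b → f a ≤ g a b) :
    (l.map f).sum ≤ ((l.zip l').map fun p => g p.1 p.2).sum := by
  induction h with
  | nil => simp
  | cons hab _ ih => simpa using add_le_add (hfg _ _ hab) ih

theorem Forall₂.sum_map_zip_le_sum_map (h : Forall₂ R l l') {f : α → M} {g : α → β → M}
    (hgf : ∀ a b, R a b → g a b ≤ f a) :
    ((l.zip l').map fun p => g p.1 p.2).sum ≤ (l.map f).sum := by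
  induction h with
  | nil => simp
  | cons hab _ ih => simpa using add_le_add (hgf _ _ hab) ih

end List

section FormulaChange

variable {V : Type*} (α : V → Bool)

theorem ite_clauseSat_le_card_sub {C C' : Finset (V × Bool)} (hCC' : C ⊆ C')
    (hC' : ClauseSat α C') : (if !decide (ClauseSat α C) then 1 else 0) ≤ C'.card - C.card := by
  by_cases hC : ClauseSat α C
  · simp [hC]
  · have hne : C ≠ C' := by rintro rfl; exact hC hC'
    have := Finset.card_lt_card (hCC'.ssubset_of_ne hne)
    simp only [hC, decide_false, Bool.not_false, if_true]
    omega

theorem countP_not_clauseSat_le_of_addedAtMost [DecidableEq V]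
    {φ φ' : List (Finset (V × Bool))} {t : ℕ} (hφφ' : AddedAtMost φ φ' t)
    (hsat : ∀ C ∈ φ', ClauseSat α C) :
    φ.countP (fun C => !decide (ClauseSat α C)) ≤ t := by
  obtain ⟨hsub, hsum⟩ := hφφ'
  refine le_trans ?_ hsum
  rw [List.countP_eq_sum_map_ite]
  exact (hsub.and_forall_mem_right hsat).sum_map_le_sum_map_zip fun _ _ ⟨hCC', hC'⟩ =>
    ite_clauseSat_le_card_sub α hCC' hC'

variable [DecidableEq V]

def repairClause (v : V) (C : Finset (V × Bool)) : Finset (V × Bool) :=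
  if ClauseSat α C then C else insert (v, α v) C

theorem subset_repairClause (v : V) (C : Finset (V × Bool)) : C ⊆ repairClause α v C := by
  unfold repairClause
  split_ifs
  exacts [subset_rfl, Finset.subset_insert _ _]

theorem clauseSat_repairClause (v : V) (C : Finset (V × Bool)) :
    ClauseSat α (repairClause α v C) := by
  unfold repairClause
  split_ifs with hC
  exacts [hC, ⟨(v, α v), Finset.mem_insert_self _ _, rfl⟩]

theorem card_repairClause_sub_le (v : V) (C : Finset (V × Bool)) :
    (repairClause α v C).card - C.card ≤ if !decide (ClauseSat α C) then 1 else 0 := by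
  unfold repairClause
  by_cases hC : ClauseSat α C
  · simp [hC]
  · have := Finset.card_insert_le (v, α v) C
    simp only [hC, if_false, decide_false, Bool.not_false, if_true]
    omega

theorem addedAtMost_map_repairClause (v : V) {φ : List (Finset (V × Bool))} {t : ℕ}
    (ht : φ.countP (fun C => !decide (ClauseSat α C)) ≤ t) :
    AddedAtMost φ (φ.map (repairClause α v)) t := by
  have hrel : List.Forall₂ (fun C C' => C' = repairClause α v C) φ (φ.map (repairClause α v)) :=
    List.forall₂_map_right_iff.mpr (List.forall₂_same.mpr fun _ _ => rfl)
  refine ⟨hrel.imp fun C _ h => h ▸ subset_repairClause α v C, le_trans ?_ ht⟩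
  rw [List.countP_eq_sum_map_ite]
  exact hrel.sum_map_zip_le_sum_map fun C _ h => h ▸ card_repairClause_sub_le α v C

theorem exists_addedAtMost_forall_clauseSat_iff [Nonempty V]
    (φ : List (Finset (V × Bool))) (t : ℕ) :
    (∃ φ', AddedAtMost φ φ' t ∧ ∀ C ∈ φ', ClauseSat α C) ↔
      φ.countP (fun C => !decide (ClauseSat α C)) ≤ t := by
  refine ⟨fun ⟨_, hφφ', hsat⟩ => countP_not_clauseSat_le_of_addedAtMost α hφφ' hsat,
    fun ht => ?_⟩
  obtain ⟨v⟩ := ‹Nonempty V›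
  exact ⟨_, addedAtMost_map_repairClause α v ht, by
    simpa using fun C _ => clauseSat_repairClause α v C⟩

end FormulaChange

theorem max3sat_iff_formula_change_general
    {V : Type*} [Nonempty V] [DecidableEq V]
    (φ : List (Finset (V × Bool)))
    (α : V → Bool) (k : ℕ) (hk : k ≤ φ.length) :
    k ≤ φ.countP (fun C => decide (ClauseSat α C)) ↔
    ∃ φ' : List (Finset (V × Bool)),
      AddedAtMost φ φ' (φ.length - k) ∧ ∀ C ∈ φ', ClauseSat α C := by
  rw [exists_addedAtMost_forall_clauseSat_iff]
  have hsplit := φ.length_eq_countP_add_countP (fun C => decide (ClauseSat α C))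
  simp only [Bool.decide_eq_true, decide_not] at hsplit
  omega

/-- Correctness of the reduction from Max-3SAT to the Formula Change Problem:
for a 3CNF formula `φ` with `m` clauses, an assignment `α`, and `k ≤ m`,
`α` satisfies at least `k` clauses of `φ` iff `φ` can be changed, by adding at most
`m − k` literals to its clauses, into a formula all of whose clauses `α` satisfies. -/
theorem max3sat_iff_formula_change
    {V : Type*} [Nonempty V] [DecidableEq V]
    (φ : List (Finset (V × Bool))) (h3 : ∀ C ∈ φ, C.card = 3)
    (α : V → Bool) (k : ℕ) (hk : k ≤ φ.length) :
    k ≤ φ.countP (fun C => decide (ClauseSat α C)) ↔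
    ∃ φ' : List (Finset (V × Bool)),
      AddedAtMost φ φ' (φ.length - k) ∧ ∀ C ∈ φ', ClauseSat α C :=
  max3sat_iff_formula_change_general φ α k hk
end
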